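/- In A(T), for any tuple ā, if n is greatest such that some a_i ∈ G_n, then the Scott rank of ā equals the Scott rank of the single element id_n. -/

import Mathlib

open scoped symmDiff

/-- `RankGE succ o x` means the tree rank of `x` (w.r.t. successor relation `succ`)
is at least `o`; unranked nodes (`rk = ∞`) satisfy this for every ordinal. -/
def RankGE {α : Type*} (succ : α → α → Prop) (o : Ordinal) (x : α) : Prop :=
  ∀ β < o, ∃ y, succ x y ∧ RankGE succ β y
termination_by o

/-- `T` is a subtree of `ω^{<ω}`: closed under initial segments. -/
def IsTree (T : Set (List ℕ)) : Prop := ∀ s t : List ℕ, s <+: t → t ∈ T → s ∈ T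

/-- `τ` is an immediate successor of `σ` in `T`. -/
def TSucc (T : Set (List ℕ)) (σ τ : List ℕ) : Prop := τ ∈ T ∧ ∃ k : ℕ, τ = σ ++ [k]

instance : Std.Commutative (α := Finset (List ℕ)) (· ∆ ·) := ⟨fun a b => symmDiff_comm a b⟩
instance : Std.Associative (α := Finset (List ℕ)) (· ∆ ·) := ⟨fun a b c => symmDiff_assoc a b c⟩

/-- The predecessor map: the symmetric-difference sum of the singletons of the
`T`-predecessors of the members of `a`. -/
def pmap (a : Finset (List ℕ)) : Finset (List ℕ) :=
  Finset.fold (· ∆ ·) ∅ (fun t => {t.dropLast}) a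

/-- The carrier `G = ⋃ₙ Gₙ`: an element of `Gₙ` is a pair `(n, a)` with `a` a finite
subset of the level-`n` nodes of `T`; `(n, ∅)` is the identity `idₙ` of `Gₙ`. -/
def Gset (T : Set (List ℕ)) : Set (ℕ × Finset (List ℕ)) :=
  {x | ∀ t ∈ x.2, t ∈ T ∧ t.length = x.1}

/-- The operations `f_a`: `fA a b = a* ∆ b*` where `a*`, `b*` are the iterated
predecessors of `a`, `b` down to the minimum of their levels. -/
def fA (x y : ℕ × Finset (List ℕ)) : ℕ × Finset (List ℕ) :=
  (min x.1 y.1, (pmap^[x.1 - min x.1 y.1] x.2) ∆ (pmap^[y.1 - min x.1 y.1] y.2))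

/-- An automorphism of the structure `A(T) = (G, (f_a)_{a ∈ G})`: a bijection of `G`
commuting with each of the named unary operations `f_a`. -/
def IsAuto (T : Set (List ℕ)) (g : ℕ × Finset (List ℕ) → ℕ × Finset (List ℕ)) : Prop :=
  Set.BijOn g (Gset T) (Gset T) ∧ ∀ a ∈ Gset T, ∀ b ∈ Gset T, g (fA a b) = fA a (g b)

abbrev GP := ℕ × Finset (List ℕ)

/-- Terms of the language of `A(T)`: variables and applications of the unary symbols `f_a`. -/
inductive ATerm : Type where
  | var : ℕ → ATerm
  | app : GP → ATerm → ATerm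

def ATerm.eval (ρ : ℕ → GP) : ATerm → GP
  | .var i => ρ i
  | .app a t => fA a (ATerm.eval ρ t)

/-- A term is `ok` if its variables are among `x₀, …, x_{k-1}` and its symbols come from `G`. -/
def ATerm.ok (T : Set (List ℕ)) (k : ℕ) : ATerm → Prop
  | .var i => i < k
  | .app a t => a ∈ Gset T ∧ ATerm.ok T k t

def env {k : ℕ} (a : Fin k → GP) : ℕ → GP := fun i => if h : i < k then a ⟨i, h⟩ else (0, ∅)

/-- `≡⁰`: the tuples satisfy the same quantifier-free formulas. -/
def eqQF (T : Set (List ℕ)) (k : ℕ) (a b : Fin k → GP) : Prop :=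
  ∀ t₁ t₂ : ATerm, ATerm.ok T k t₁ → ATerm.ok T k t₂ →
    (ATerm.eval (env a) t₁ = ATerm.eval (env a) t₂ ↔ ATerm.eval (env b) t₁ = ATerm.eval (env b) t₂)

/-- The standard back-and-forth equivalences `≡^β` on tuples of `A(T)`. -/
def BF (T : Set (List ℕ)) (β : Ordinal) (k : ℕ) (a b : Fin k → GP) : Prop :=
  if β = 0 then eqQF T k a b
  else ∀ γ < β,
    (∀ c ∈ Gset T, ∃ d ∈ Gset T, BF T γ (k + 1) (Fin.snoc a c) (Fin.snoc b d)) ∧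
    (∀ d ∈ Gset T, ∃ c ∈ Gset T, BF T γ (k + 1) (Fin.snoc a c) (Fin.snoc b d))
termination_by β

/-- `b̄` lies in the automorphism orbit of `ā`. -/
def InOrbit (T : Set (List ℕ)) {k : ℕ} (a b : Fin k → GP) : Prop :=
  ∃ g, IsAuto T g ∧ ∀ i, g (a i) = b i

/-- Scott rank of a tuple: the least `β` such that `≡^β`-equivalence to the tuple
implies membership in its orbit. -/
noncomputable def SR (T : Set (List ℕ)) {k : ℕ} (a : Fin k → GP) : Ordinal :=
  sInf {β : Ordinal | ∀ b : Fin k → GP, (∀ i, b i ∈ Gset T) → BF T β k a b → InOrbit T a b}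

/-!
An operation `f_a` projects its argument down to the level of `a` and adds the projection of `a`.
Hence, if `ā` has maximal level `n`, the tuples satisfying the same quantifier-free formulas as `ā`
are exactly its translates by level-`n` vectors `c`, each coordinate of level `l` being shifted
by the projection of `c` to level `l`. By induction on `β`, `ā ≡^β b̄` holds iff the vector `c` can
moreover be lifted to every higher level, the lifts again being liftable in this sense to every
smaller rank. On the other hand the automorphisms are exactly the shifts by coherent sequences
`(c_m)` with `pmap c_{m+1} = c_m`, so `b̄` lies in the orbit of `ā` iff `c` lies on such a sequence.
Both descriptions depend on `ā` only through `n`, so `ā` and `idₙ` have the same Scott rank.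
-/

open Function Set

@[simp]
lemma Finset.empty_symmDiff {α : Type*} [DecidableEq α] (s : Finset α) : ∅ ∆ s = s :=
  bot_symmDiff s

@[simp]
lemma Finset.symmDiff_empty {α : Type*} [DecidableEq α] (s : Finset α) : s ∆ ∅ = s :=
  symmDiff_bot s

@[simp]
lemma pmap_empty : pmap ∅ = ∅ := rfl

lemma pmap_symmDiff (s t : Finset (List ℕ)) : pmap (s ∆ t) = pmap s ∆ pmap t := by
  have hfold (u v : Finset (List ℕ)) :
      pmap (u ∪ v) ∆ pmap (u ∩ v) = pmap u ∆ pmap v :=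
    Finset.fold_union_inter
  have hunion : s ∆ t ∪ s ∩ t = s ∪ t := symmDiff_sup_inf s t
  have hinter : s ∆ t ∩ (s ∩ t) = ∅ :=
    Finset.disjoint_iff_inter_eq_empty.1 (disjoint_symmDiff_inf s t)
  have h := hfold (s ∆ t) (s ∩ t)
  rw [hunion, hinter, pmap_empty, Finset.symmDiff_empty] at h
  rw [← hfold, h, symmDiff_symmDiff_cancel_right]

lemma pmap_insert {x : List ℕ} {s : Finset (List ℕ)} (hx : x ∉ s) :
    pmap (insert x s) = {x.dropLast} ∆ pmap s :=
  Finset.fold_insert hx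

lemma pmap_subset_image_dropLast (s : Finset (List ℕ)) : pmap s ⊆ s.image List.dropLast := by
  induction s using Finset.induction_on with
  | empty => simp [pmap]
  | insert x s hx ih =>
    rw [pmap_insert hx, Finset.image_insert]
    exact symmDiff_le_sup.trans (Finset.union_subset_union le_rfl ih)

lemma pmap_iterate_symmDiff (j : ℕ) (s t : Finset (List ℕ)) :
    pmap^[j] (s ∆ t) = pmap^[j] s ∆ pmap^[j] t := by
  induction j generalizing s t with
  | zero => rfl
  | succ j ih => rw [iterate_succ_apply, iterate_succ_apply, iterate_succ_apply, pmap_symmDiff, ih]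

@[simp]
lemma pmap_iterate_empty (j : ℕ) : pmap^[j] (∅ : Finset (List ℕ)) = ∅ :=
  iterate_fixed rfl j

def LevelSet (T : Set (List ℕ)) (n : ℕ) : Set (Finset (List ℕ)) :=
  {c | ∀ t ∈ c, t ∈ T ∧ t.length = n}

lemma mem_Gset_iff {T : Set (List ℕ)} {x : GP} : x ∈ Gset T ↔ x.2 ∈ LevelSet T x.1 := Iff.rfl

lemma id_mem_Gset (T : Set (List ℕ)) (m : ℕ) : ((m, ∅) : GP) ∈ Gset T := by
  simp [Gset]

lemma symmDiff_mem_levelSet {T : Set (List ℕ)} {n : ℕ} {s t : Finset (List ℕ)}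
    (hs : s ∈ LevelSet T n) (ht : t ∈ LevelSet T n) : s ∆ t ∈ LevelSet T n := fun u hu =>
  (Finset.mem_union.1 (symmDiff_le_sup (α := Finset (List ℕ)) hu)).elim (hs u) (ht u)

lemma pmap_mem_levelSet {T : Set (List ℕ)} (hT : IsTree T) {n : ℕ} {s : Finset (List ℕ)}
    (hs : s ∈ LevelSet T (n + 1)) : pmap s ∈ LevelSet T n := by
  intro u hu
  obtain ⟨t, ht, rfl⟩ := Finset.mem_image.1 (pmap_subset_image_dropLast s hu)
  obtain ⟨htT, hlen⟩ := hs t ht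
  exact ⟨hT _ t (List.dropLast_prefix t) htT, by simp [hlen]⟩

lemma pmap_iterate_mem_levelSet {T : Set (List ℕ)} (hT : IsTree T) {n m : ℕ}
    {s : Finset (List ℕ)} (hs : s ∈ LevelSet T m) (hnm : n ≤ m) :
    pmap^[m - n] s ∈ LevelSet T n := by
  obtain ⟨j, rfl⟩ := Nat.exists_eq_add_of_le hnm
  rw [Nat.add_sub_cancel_left]
  induction j generalizing s with
  | zero => exact hs
  | succ j ih => exact ih (pmap_mem_levelSet hT hs) (by omega)

lemma fA_of_le {x y : GP} (h : x.1 ≤ y.1) : fA x y = (x.1, x.2 ∆ pmap^[y.1 - x.1] y.2) := by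
  simp [fA, h]

lemma fA_id_of_le {m : ℕ} {x : GP} (h : x.1 ≤ m) : fA (m, ∅) x = x := by
  simp [fA, h]

lemma fA_id_id (l m : ℕ) : fA ((l, ∅) : GP) (m, ∅) = (min l m, ∅) := by
  simp [fA]

lemma fA_id_eq_self_iff {m : ℕ} {x : GP} : fA (m, ∅) x = x ↔ x.1 ≤ m :=
  ⟨fun h => by simpa [fA] using congrArg Prod.fst h, fA_id_of_le⟩

def levelShift (f : ℕ → Finset (List ℕ)) (x : GP) : GP := (x.1, x.2 ∆ f x.1)

def levelTranslate (n : ℕ) (c : Finset (List ℕ)) : GP → GP :=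
  levelShift fun l => pmap^[n - l] c

lemma levelShift_involutive (f : ℕ → Finset (List ℕ)) : Involutive (levelShift f) := fun x => by
  simp [levelShift]

lemma levelTranslate_involutive (n : ℕ) (c : Finset (List ℕ)) :
    Involutive (levelTranslate n c) :=
  levelShift_involutive _

lemma levelTranslate_injective {n : ℕ} {c : Finset (List ℕ)} : Injective (levelTranslate n c) :=
  (levelTranslate_involutive n c).injective

lemma levelShift_mem_Gset {T : Set (List ℕ)} {f : ℕ → Finset (List ℕ)} {x : GP}
    (hf : f x.1 ∈ LevelSet T x.1) (hx : x ∈ Gset T) : levelShift f x ∈ Gset T :=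
  symmDiff_mem_levelSet hx hf

lemma levelTranslate_mem_Gset {T : Set (List ℕ)} (hT : IsTree T) {n : ℕ} {c : Finset (List ℕ)}
    {x : GP} (hc : c ∈ LevelSet T n) (hx : x ∈ Gset T) (hxn : x.1 ≤ n) :
    levelTranslate n c x ∈ Gset T :=
  levelShift_mem_Gset (pmap_iterate_mem_levelSet hT hc hxn) hx

lemma levelTranslate_iterate {n m : ℕ} {c : Finset (List ℕ)} {x : GP} (hxn : x.1 ≤ n)
    (hnm : n ≤ m) : levelTranslate n (pmap^[m - n] c) x = levelTranslate m c x := by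
  simp only [levelTranslate, levelShift, ← iterate_add_apply]
  congr 3
  omega

lemma eq_of_levelTranslate_eq {n : ℕ} {c c' : Finset (List ℕ)} {x : GP} (hx : x.1 = n)
    (h : levelTranslate n c x = levelTranslate n c' x) : c = c' := by
  simpa [levelTranslate, levelShift, hx] using congrArg Prod.snd h

lemma fA_levelTranslate {n : ℕ} (c : Finset (List ℕ)) (u : GP) {y : GP} (hy : y.1 ≤ n) :
    fA u (levelTranslate n c y) = levelTranslate n c (fA u y) := by
  simp only [fA, levelTranslate, levelShift, pmap_iterate_symmDiff, symmDiff_assoc,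
    ← iterate_add_apply]
  congr 4
  omega

def Coherent (T : Set (List ℕ)) (f : ℕ → Finset (List ℕ)) : Prop :=
  ∀ m, f m ∈ LevelSet T m ∧ pmap (f (m + 1)) = f m

lemma Coherent.iterate_pmap {T : Set (List ℕ)} {f : ℕ → Finset (List ℕ)} (hf : Coherent T f)
    {l m : ℕ} (h : l ≤ m) : pmap^[m - l] (f m) = f l := by
  obtain ⟨j, rfl⟩ := Nat.exists_eq_add_of_le h
  rw [Nat.add_sub_cancel_left]
  induction j with
  | zero => rfl
  | succ j ih => rw [iterate_succ_apply, ← Nat.add_assoc, (hf _).2, ih (by omega)]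

lemma Coherent.levelTranslate_eq {T : Set (List ℕ)} {f : ℕ → Finset (List ℕ)} (hf : Coherent T f)
    {n : ℕ} {x : GP} (hx : x.1 ≤ n) : levelTranslate n (f n) x = levelShift f x := by
  simp only [levelTranslate, levelShift, hf.iterate_pmap hx]

lemma isAuto_levelShift {T : Set (List ℕ)} {f : ℕ → Finset (List ℕ)} (hf : Coherent T f) :
    IsAuto T (levelShift f) := by
  have hmaps : MapsTo (levelShift f) (Gset T) (Gset T) := fun x hx =>
    levelShift_mem_Gset (hf x.1).1 hx
  have hinv := levelShift_involutive f
  refine ⟨InvOn.bijOn ⟨fun x _ => hinv x, fun x _ => hinv x⟩ hmaps hmaps, fun u _ y _ => ?_⟩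
  simp only [fA, levelShift, pmap_iterate_symmDiff, symmDiff_assoc,
    hf.iterate_pmap (min_le_right u.1 y.1)]

lemma IsAuto.fst_apply_id {T : Set (List ℕ)} {g : GP → GP} (hg : IsAuto T g) (m : ℕ) :
    (g (m, ∅)).1 = m := by
  have hcomm (x y : ℕ) : g (min x y, ∅) = fA (x, ∅) (g (y, ∅)) := by
    rw [← fA_id_id]
    exact hg.2 _ (id_mem_Gset T x) _ (id_mem_Gset T y)
  have hle : (g (m, ∅)).1 ≤ m := by
    have h := congrArg Prod.fst (hcomm m m)
    rw [min_self] at h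
    exact h.le.trans (min_le_left _ _)
  -- projecting `idₘ` to the level of its image gives an element with the same image
  have h := hcomm (g (m, ∅)).1 m
  rw [min_eq_left hle, fA_id_of_le le_rfl] at h
  simpa using congrArg Prod.fst (hg.1.injOn (id_mem_Gset T _) (id_mem_Gset T m) h)

lemma IsAuto.eq_levelShift {T : Set (List ℕ)} {g : GP → GP} (hg : IsAuto T g) {x : GP}
    (hx : x ∈ Gset T) : g x = levelShift (fun m => (g (m, ∅)).2) x := by
  have h := hg.2 x hx _ (id_mem_Gset T x.1)
  rw [show fA x (x.1, ∅) = x by simp [fA]] at h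
  rw [h, fA_of_le (hg.fst_apply_id x.1).ge]
  simp [levelShift, hg.fst_apply_id]

lemma IsAuto.coherent {T : Set (List ℕ)} {g : GP → GP} (hg : IsAuto T g) :
    Coherent T fun m => (g (m, ∅)).2 := by
  intro m
  have hmem := hg.1.mapsTo (id_mem_Gset T m)
  rw [mem_Gset_iff, hg.fst_apply_id] at hmem
  refine ⟨hmem, ?_⟩
  have h := hg.2 _ (id_mem_Gset T m) _ (id_mem_Gset T (m + 1))
  rw [fA_id_id, min_eq_left (Nat.le_succ m),
    fA_of_le (by rw [hg.fst_apply_id]; omega), hg.fst_apply_id] at h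
  simpa using (congrArg Prod.snd h).symm

lemma inOrbit_iff {T : Set (List ℕ)} {k n : ℕ} {a b : Fin k → GP} (haG : ∀ j, a j ∈ Gset T)
    (hmax : ∀ j, (a j).1 ≤ n) :
    InOrbit T a b ↔ ∃ f, Coherent T f ∧ b = levelTranslate n (f n) ∘ a := by
  constructor
  · rintro ⟨g, hg, hab⟩
    refine ⟨_, hg.coherent, funext fun j => ?_⟩
    rw [comp_apply, hg.coherent.levelTranslate_eq (hmax j), ← hab, hg.eq_levelShift (haG j)]
  · rintro ⟨f, hf, rfl⟩
    exact ⟨levelShift f, isAuto_levelShift hf, fun j => (hf.levelTranslate_eq (hmax j)).symm⟩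

section Terms

variable {T : Set (List ℕ)} {k : ℕ}

lemma env_comp {a : Fin k → GP} (g : GP → GP) {i : ℕ} (hi : i < k) :
    env (g ∘ a) i = g (env a i) := by
  simp [env, hi]

@[simp]
lemma env_val (a : Fin k → GP) (j : Fin k) : env a j = a j := by
  simp [env]

lemma env_snoc {a : Fin k → GP} (e : GP) {i : ℕ} (hi : i < k) :
    env (Fin.snoc a e) i = env a i := by
  simp [env, hi, Nat.lt_succ_of_lt hi, Fin.snoc]

lemma ATerm.ok.succ {t : ATerm} (ht : t.ok T k) : t.ok T (k + 1) := by
  induction t with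
  | var i => exact Nat.lt_succ_of_lt ht
  | app u t ih => exact ⟨ht.1, ih ht.2⟩

lemma ATerm.eval_env_snoc {a : Fin k → GP} (e : GP) {t : ATerm} (ht : t.ok T k) :
    t.eval (env (Fin.snoc a e)) = t.eval (env a) := by
  induction t with
  | var i => exact env_snoc e ht
  | app u t ih => simp only [ATerm.eval, ih ht.2]

lemma ATerm.fst_eval_le {a : Fin k → GP} {n : ℕ} (hmax : ∀ j, (a j).1 ≤ n) {t : ATerm}
    (ht : t.ok T k) : (t.eval (env a)).1 ≤ n := by
  induction t with
  | var i => simpa [ATerm.eval, env, show i < k from ht] using hmax ⟨i, ht⟩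
  | app u t ih => exact (min_le_right _ _).trans (ih ht.2)

lemma ATerm.eval_levelTranslate {a : Fin k → GP} {n : ℕ} (c : Finset (List ℕ))
    (hmax : ∀ j, (a j).1 ≤ n) {t : ATerm} (ht : t.ok T k) :
    t.eval (env (levelTranslate n c ∘ a)) = levelTranslate n c (t.eval (env a)) := by
  induction t with
  | var i => exact env_comp _ ht
  | app u t ih =>
    rw [ATerm.eval, ATerm.eval, ih ht.2, fA_levelTranslate c u (fst_eval_le hmax ht.2)]

lemma eqQF_of_snoc {a b : Fin k → GP} {e d : GP}
    (h : eqQF T (k + 1) (Fin.snoc a e) (Fin.snoc b d)) : eqQF T k a b := by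
  intro t₁ t₂ h₁ h₂
  simpa only [ATerm.eval_env_snoc _ h₁, ATerm.eval_env_snoc _ h₂] using h t₁ t₂ h₁.succ h₂.succ

lemma eqQF_levelTranslate {a : Fin k → GP} {n : ℕ} (c : Finset (List ℕ))
    (hmax : ∀ j, (a j).1 ≤ n) : eqQF T k a (levelTranslate n c ∘ a) := by
  intro t₁ t₂ h₁ h₂
  rw [ATerm.eval_levelTranslate c hmax h₁, ATerm.eval_levelTranslate c hmax h₂,
    levelTranslate_injective.eq_iff]

lemma fst_eq_of_eqQF {a b : Fin k → GP} (h : eqQF T k a b) (j : Fin k) : (b j).1 = (a j).1 := by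
  -- `f_{idₘ}` fixes exactly the elements of level at most `m`
  have key (m : ℕ) : (a j).1 ≤ m ↔ (b j).1 ≤ m := by
    simpa [ATerm.eval, env, fA_id_eq_self_iff] using
      h (.app (m, ∅) (.var j)) (.var j) ⟨id_mem_Gset T m, j.isLt⟩ j.isLt
  exact le_antisymm ((key _).1 le_rfl) ((key _).2 le_rfl)

lemma eq_levelTranslate_of_eqQF (hT : IsTree T) {a b : Fin k → GP} {n : ℕ}
    (haG : ∀ j, a j ∈ Gset T) {i : Fin k} (hi : (a i).1 = n) (hmax : ∀ j, (a j).1 ≤ n)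
    (h : eqQF T k a b) : b = levelTranslate n ((a i).2 ∆ (b i).2) ∘ a := by
  funext j
  set μ := (a j).1
  -- the symbol `f_s` with `s = aᵢ* ∆ aⱼ` maps `aᵢ` to `aⱼ`, so it maps `bᵢ` to `bⱼ`
  set s := pmap^[n - μ] (a i).2 ∆ (a j).2
  have hs : ((μ, s) : GP) ∈ Gset T :=
    symmDiff_mem_levelSet (hi ▸ pmap_iterate_mem_levelSet hT (haG i) (hi ▸ hmax j)) (haG j)
  have key := h (.app (μ, s) (.var i)) (.var j) ⟨hs, i.isLt⟩ j.isLt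
  simp only [ATerm.eval, env_val] at key
  rw [fA_of_le (hi ▸ hmax j), fA_of_le (fst_eq_of_eqQF h i ▸ hi ▸ hmax j)] at key
  dsimp only at key
  rw [fst_eq_of_eqQF h i, hi] at key
  rw [comp_apply, ← key.1 (Prod.ext rfl (symmDiff_symmDiff_self' _ _)),
    levelTranslate, levelShift, pmap_iterate_symmDiff, symmDiff_left_comm, ← symmDiff_assoc]

lemma eqQF_iff (hT : IsTree T) {a b : Fin k → GP} {n : ℕ} (haG : ∀ j, a j ∈ Gset T)
    (hbG : ∀ j, b j ∈ Gset T) {i : Fin k} (hi : (a i).1 = n) (hmax : ∀ j, (a j).1 ≤ n) :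
    eqQF T k a b ↔ ∃ c ∈ LevelSet T n, b = levelTranslate n c ∘ a := by
  refine ⟨fun h => ⟨_, ?_, eq_levelTranslate_of_eqQF hT haG hi hmax h⟩, ?_⟩
  · exact symmDiff_mem_levelSet (hi ▸ haG i) (hi ▸ fst_eq_of_eqQF h i ▸ hbG i)
  · rintro ⟨c, -, rfl⟩
    exact eqQF_levelTranslate c hmax

end Terms

lemma eqQF_of_BF {T : Set (List ℕ)} {β : Ordinal} {k : ℕ} {a b : Fin k → GP}
    (h : BF T β k a b) : eqQF T k a b := by
  rcases eq_or_ne β 0 with rfl | hβ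
  · rwa [BF, if_pos rfl] at h
  rw [BF, if_neg hβ] at h
  obtain ⟨d, -, hd⟩ := (h 0 (pos_iff_ne_zero.2 hβ)).1 (0, ∅) (id_mem_Gset T 0)
  rw [BF, if_pos rfl] at hd
  exact eqQF_of_snoc hd

def Extendible (T : Set (List ℕ)) (β : Ordinal) (n : ℕ) (c : Finset (List ℕ)) : Prop :=
  ∀ γ < β, ∀ m, n < m → ∃ c' ∈ LevelSet T m, pmap^[m - n] c' = c ∧ Extendible T γ m c'
termination_by β

lemma Extendible.mono {T : Set (List ℕ)} {β γ : Ordinal} {n : ℕ} {c : Finset (List ℕ)}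
    (h : Extendible T β n c) (hγ : γ ≤ β) : Extendible T γ n c := by
  rw [Extendible] at h ⊢
  exact fun δ hδ => h δ (hδ.trans_le hγ)

lemma extendible_zero (T : Set (List ℕ)) (n : ℕ) (c : Finset (List ℕ)) : Extendible T 0 n c := by
  rw [Extendible]
  exact fun γ hγ => absurd hγ (by simp)

lemma Extendible.exists_lift {T : Set (List ℕ)} {β γ : Ordinal} {n m : ℕ} {c : Finset (List ℕ)}
    (h : Extendible T β n c) (hc : c ∈ LevelSet T n) (hγ : γ < β) (hnm : n ≤ m) :
    ∃ c' ∈ LevelSet T m, pmap^[m - n] c' = c ∧ Extendible T γ m c' := by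
  rcases hnm.eq_or_lt with rfl | hlt
  · exact ⟨c, hc, by simp, h.mono hγ.le⟩
  · rw [Extendible] at h
    exact h γ hγ m hlt

def IsExtTranslate (T : Set (List ℕ)) (β : Ordinal) (n : ℕ) {k : ℕ} (a b : Fin k → GP) : Prop :=
  ∃ c ∈ LevelSet T n, Extendible T β n c ∧ b = levelTranslate n c ∘ a

namespace IsExtTranslate

variable {T : Set (List ℕ)} {β : Ordinal} {n k : ℕ} {a b : Fin k → GP}

lemma fst_comp (h : IsExtTranslate T β n a b) : Prod.fst ∘ b = Prod.fst ∘ a := by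
  obtain ⟨c, -, -, rfl⟩ := h
  rfl

lemma symm (h : IsExtTranslate T β n a b) : IsExtTranslate T β n b a := by
  obtain ⟨c, hc, hE, rfl⟩ := h
  exact ⟨c, hc, hE, by rw [← comp_assoc, (levelTranslate_involutive n c).comp_self, id_comp]⟩

lemma exists_snoc (hT : IsTree T) (hmax : ∀ j, (a j).1 ≤ n) (h : IsExtTranslate T β n a b)
    {γ : Ordinal} (hγ : γ < β) {e : GP} (he : e ∈ Gset T) :
    ∃ d ∈ Gset T, IsExtTranslate T γ (max n e.1) (Fin.snoc a e) (Fin.snoc b d) := by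
  obtain ⟨c, hc, hE, rfl⟩ := h
  obtain ⟨c', hc', rfl, hE'⟩ := hE.exists_lift hc hγ (le_max_left n e.1)
  refine ⟨_, levelTranslate_mem_Gset hT hc' he (le_max_right n e.1), c', hc', hE', ?_⟩
  rw [Fin.comp_snoc]
  congr 1
  funext j
  exact levelTranslate_iterate (hmax j) (le_max_left n e.1)

end IsExtTranslate

lemma snoc_mem_Gset {T : Set (List ℕ)} {k : ℕ} {a : Fin k → GP} {e : GP}
    (haG : ∀ j, a j ∈ Gset T) (he : e ∈ Gset T) :
    ∀ j, (Fin.snoc a e : Fin (k + 1) → GP) j ∈ Gset T :=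
  Fin.lastCases (by simpa using he) (by simpa using haG)

lemma isGreatest_range_fst_snoc {k n : ℕ} {a : Fin k → GP}
    (hn : IsGreatest (range (Prod.fst ∘ a)) n) (e : GP) :
    IsGreatest (range (Prod.fst ∘ Fin.snoc a e)) (max n e.1) := by
  rw [Fin.comp_snoc, Fin.range_snoc, max_comm]
  exact hn.insert e.1

theorem BF_iff_isExtTranslate {T : Set (List ℕ)} (hT : IsTree T) (β : Ordinal) :
    ∀ {k n : ℕ} {a b : Fin k → GP}, (∀ j, a j ∈ Gset T) → (∀ j, b j ∈ Gset T) →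
      IsGreatest (range (Prod.fst ∘ a)) n → (BF T β k a b ↔ IsExtTranslate T β n a b) := by
  induction β using WellFoundedLT.induction with
  | _ β IH =>
  intro k n a b haG hbG hn
  obtain ⟨i, hi⟩ := hn.1
  have hmax : ∀ j, (a j).1 ≤ n := fun j => hn.2 ⟨j, rfl⟩
  rcases eq_or_ne β 0 with rfl | hβ
  · rw [BF, if_pos rfl, eqQF_iff hT haG hbG hi hmax]
    simp [IsExtTranslate, extendible_zero]
  constructor
  · intro h
    obtain ⟨c, hc, rfl⟩ := (eqQF_iff hT haG hbG hi hmax).1 (eqQF_of_BF h)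
    refine ⟨c, hc, ?_, rfl⟩
    rw [Extendible]
    intro γ hγ m hnm
    rw [BF, if_neg hβ] at h
    obtain ⟨d, hd, hbf⟩ := (h γ hγ).1 (m, ∅) (id_mem_Gset T m)
    have hm := isGreatest_range_fst_snoc hn (m, ∅)
    rw [max_eq_right hnm.le] at hm
    obtain ⟨c', hc', hE', hsnoc⟩ :=
      (IH γ hγ (snoc_mem_Gset haG (id_mem_Gset T m)) (snoc_mem_Gset hbG hd) hm).1 hbf
    refine ⟨c', hc', ?_, hE'⟩
    rw [Fin.comp_snoc] at hsnoc
    have hres := congrFun (Fin.snoc_injective2 hsnoc).1 i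
    rw [comp_apply, comp_apply, ← levelTranslate_iterate (hmax i) hnm.le] at hres
    exact eq_of_levelTranslate_eq hi hres.symm
  · intro h
    rw [BF, if_neg hβ]
    intro γ hγ
    have hbn : IsGreatest (range (Prod.fst ∘ b)) n := h.fst_comp ▸ hn
    refine ⟨fun e he => ?_, fun d hd => ?_⟩
    · obtain ⟨d, hd, h'⟩ := h.exists_snoc hT hmax hγ he
      exact ⟨d, hd, (IH γ hγ (snoc_mem_Gset haG he) (snoc_mem_Gset hbG hd)
        (isGreatest_range_fst_snoc hn e)).2 h'⟩
    · obtain ⟨e, he, h'⟩ := h.symm.exists_snoc hT (fun j => hbn.2 ⟨j, rfl⟩) hγ hd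
      exact ⟨e, he, (IH γ hγ (snoc_mem_Gset haG he) (snoc_mem_Gset hbG hd)
        (h'.fst_comp ▸ isGreatest_range_fst_snoc hbn d)).2 h'.symm⟩

lemma SR_eq_sInf_extendible {T : Set (List ℕ)} (hT : IsTree T) {k n : ℕ} {a : Fin k → GP}
    (haG : ∀ j, a j ∈ Gset T) (hn : IsGreatest (range (Prod.fst ∘ a)) n) :
    SR T a = sInf {β | ∀ c ∈ LevelSet T n, Extendible T β n c → ∃ f, Coherent T f ∧ f n = c} := by
  obtain ⟨i, hi⟩ := hn.1
  have hmax : ∀ j, (a j).1 ≤ n := fun j => hn.2 ⟨j, rfl⟩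
  rw [SR]
  congr 1
  ext β
  constructor
  · intro h c hc hE
    have hbG (j : Fin k) : (levelTranslate n c ∘ a) j ∈ Gset T :=
      levelTranslate_mem_Gset hT hc (haG j) (hmax j)
    obtain ⟨f, hf, hfa⟩ := (inOrbit_iff haG hmax).1
      (h _ hbG ((BF_iff_isExtTranslate hT β haG hbG hn).2 ⟨c, hc, hE, rfl⟩))
    exact ⟨f, hf, (eq_of_levelTranslate_eq hi (congrFun hfa i)).symm⟩
  · intro h b hbG hbf
    obtain ⟨c, hc, hE, rfl⟩ := (BF_iff_isExtTranslate hT β haG hbG hn).1 hbf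
    obtain ⟨f, hf, rfl⟩ := h c hc hE
    exact (inOrbit_iff haG hmax).2 ⟨f, hf, rfl⟩

theorem stmt_14 (T : Set (List ℕ)) (hT : IsTree T) (k : ℕ) (a : Fin k → GP)
    (haG : ∀ i, a i ∈ Gset T) (n : ℕ) (i : Fin k) (hi : (a i).1 = n)
    (hmax : ∀ j, (a j).1 ≤ n) :
    SR T a = SR T ![((n, ∅) : GP)] := by
  have hn : IsGreatest (range (Prod.fst ∘ a)) n := ⟨⟨i, hi⟩, forall_mem_range.2 hmax⟩
  have hid : IsGreatest (range (Prod.fst ∘ ![((n, ∅) : GP)])) n :=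
    ⟨⟨0, rfl⟩, forall_mem_range.2 (Fin.forall_fin_one.2 le_rfl)⟩
  rw [SR_eq_sInf_extendible hT haG hn,
    SR_eq_sInf_extendible hT (Fin.forall_fin_one.2 (id_mem_Gset T n)) hid]
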